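/- arXiv:2203.09950 — 4 statements merged into one kernel-verified Lean document; each statement's English description precedes it below -/
import Mathlib

section
/- Closure (validity) property of the fault-tolerant midpoint: let n, f be natural numbers with n > 3f, let x : Fin n → ℝ, and let G ⊆ Fin n have complement of cardinality at most f. Then mid_f(x) = (x_(f+1) + x_(n−f))/2 lies in the closed interval [min_{i∈G} x i, max_{i∈G} x i]. (This is the 'closure property of approximate agreement' invoked in the proof of Lemma 3 of the paper: the value computed by FTAverage always lies within the range of the values contributed by nonfaulty nodes.) -/
open Finset

/-- The `k`-th smallest entry (1-indexed, counted with multiplicity) of `x : Fin n → ℝ`. -/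
noncomputable def orderStat {n : ℕ} (x : Fin n → ℝ) (k : ℕ) : ℝ :=
  ((Multiset.map x (Finset.univ : Finset (Fin n)).val).sort (· ≤ ·)).getD (k - 1) 0

/-- The `k`-th smallest (1-indexed, with multiplicity) of the `|G|` values `x i`, `i ∈ G`. -/
noncomputable def orderStatOn {n : ℕ} (G : Finset (Fin n)) (x : Fin n → ℝ) (k : ℕ) : ℝ :=
  ((Multiset.map x G.val).sort (· ≤ ·)).getD (k - 1) 0

/-- The fault-tolerant midpoint `mid_f(x) = (x_(f+1) + x_(n−f))/2`. -/
noncomputable def ftMid (n f : ℕ) (x : Fin n → ℝ) : ℝ :=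
  (orderStat x (f + 1) + orderStat x (n - f)) / 2

/-- If the complement of `G` has at most `f` elements and `n > 3f`, then `G` is nonempty. -/
lemma nonempty_of_compl {n f : ℕ} (hn : 3 * f < n) {G : Finset (Fin n)}
    (hG : Gᶜ.card ≤ f) : G.Nonempty := by
  rw [← Finset.card_pos]
  have h := Finset.card_compl G
  simp only [Fintype.card_fin] at h
  omega


lemma take_filter_le {l : List ℝ} (hs : l.Pairwise (· ≤ ·)) {k : ℕ} (hk1 : 1 ≤ k)
    (hk : k ≤ l.length) :
    k ≤ (l.filter (fun a => decide (a ≤ l.getD (k - 1) 0))).length := by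
  have hlt : k - 1 < l.length := by omega
  rw [List.getD_eq_getElem l 0 hlt]
  have hsplit : l = l.take k ++ l.drop k := (List.take_append_drop k l).symm
  have h1 : (l.take k).filter (fun a => decide (a ≤ l[k-1])) = l.take k := by
    apply List.filter_eq_self.mpr
    intro a ha
    obtain ⟨j, hj, rfl⟩ := List.mem_iff_getElem.mp ha
    have hjl : j < l.length := by simp [List.length_take] at hj; omega
    rw [List.getElem_take]
    simp only [decide_eq_true_eq]
    have : j ≤ k - 1 := by
      have := hj; simp [List.length_take] at this; omega
    exact hs.rel_get_of_le (a := ⟨j, hjl⟩) (b := ⟨k-1, hlt⟩) this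
  calc k = (l.take k).length := by simp [List.length_take]; omega
    _ = ((l.take k).filter (fun a => decide (a ≤ l[k-1]))).length := by rw [h1]
    _ ≤ (l.filter (fun a => decide (a ≤ l[k-1]))).length :=
        ((List.take_sublist k l).filter _).length_le

lemma drop_filter_ge {l : List ℝ} (hs : l.Pairwise (· ≤ ·)) {k : ℕ} (hk1 : 1 ≤ k)
    (hk : k ≤ l.length) :
    l.length - (k - 1) ≤ (l.filter (fun a => decide (l.getD (k - 1) 0 ≤ a))).length := by
  have hlt : k - 1 < l.length := by omega
  rw [List.getD_eq_getElem l 0 hlt]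
  have hsplit : l = l.take (k-1) ++ l.drop (k-1) := (List.take_append_drop (k-1) l).symm
  have h1 : (l.drop (k-1)).filter (fun a => decide (l[k-1] ≤ a)) = l.drop (k-1) := by
    apply List.filter_eq_self.mpr
    intro a ha
    obtain ⟨j, hj, rfl⟩ := List.mem_iff_getElem.mp ha
    have hjl : k - 1 + j < l.length := by
      have := hj; simp [List.length_drop] at this; omega
    rw [List.getElem_drop]
    simp only [decide_eq_true_eq]
    exact hs.rel_get_of_le (a := ⟨k-1, hlt⟩) (b := ⟨k-1+j, hjl⟩) (by simp)
  calc l.length - (k-1) = (l.drop (k-1)).length := by simp [List.length_drop]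
    _ = ((l.drop (k-1)).filter (fun a => decide (l[k-1] ≤ a))).length := by rw [h1]
    _ ≤ (l.filter (fun a => decide (l[k-1] ≤ a))).length :=
        ((List.drop_sublist (k-1) l).filter _).length_le

lemma filter_length_eq_card {n : ℕ} (x : Fin n → ℝ) (p : ℝ → Prop) [DecidablePred p] :
    (((Multiset.map x (Finset.univ : Finset (Fin n)).val).sort (· ≤ ·)).filter
      (fun a => decide (p a))).length = (Finset.univ.filter (fun i => p (x i))).card := by
  have h1 : ((((Multiset.map x (Finset.univ : Finset (Fin n)).val).sort (· ≤ ·)).filter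
      (fun a => decide (p a)) : List ℝ) : Multiset ℝ)
      = Multiset.filter p (Multiset.map x (Finset.univ : Finset (Fin n)).val) := by
    have h := Multiset.filter_coe p
      ((Multiset.map x (Finset.univ : Finset (Fin n)).val).sort (· ≤ ·))
    rw [Multiset.sort_eq] at h
    exact h.symm
  have h2 := congrArg Multiset.card h1
  simp only [Multiset.coe_card] at h2
  rw [h2, Multiset.filter_map, Multiset.card_map]
  rfl

lemma exists_mem_compl_lt {n : ℕ} {G S : Finset (Fin n)} (h : Gᶜ.card < S.card) :
    ∃ i ∈ S, i ∈ G := by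
  by_contra hc
  push_neg at hc
  have : S ⊆ Gᶜ := fun i hi => Finset.mem_compl.mpr (hc i hi)
  exact absurd (Finset.card_le_card this) (by omega)


/-- Closure (validity) property of the fault-tolerant midpoint: `mid_f(x)` lies within
the range of the values contributed by nonfaulty nodes. -/
theorem stmt_2 (n f : ℕ) (hn : 3 * f < n) (x : Fin n → ℝ) (G : Finset (Fin n))
    (hG : Gᶜ.card ≤ f) :
    ftMid n f x ∈
      Set.Icc (G.inf' (nonempty_of_compl hn hG) x) (G.sup' (nonempty_of_compl hn hG) x) := by
  have hne := nonempty_of_compl hn hG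
  set l := (Multiset.map x (Finset.univ : Finset (Fin n)).val).sort (· ≤ ·) with hl
  have hlen : l.length = n := by
    rw [hl, Multiset.length_sort, Multiset.card_map]
    simp
  have hsorted : l.Pairwise (· ≤ ·) := Multiset.pairwise_sort _ _
  have hA : ∃ i ∈ G, x i ≤ orderStat x (f + 1) := by
    have h1 := take_filter_le hsorted (k := f + 1) (by omega) (by omega)
    rw [filter_length_eq_card x (fun a => a ≤ l.getD (f + 1 - 1) 0)] at h1
    obtain ⟨i, hiS, hiG⟩ := exists_mem_compl_lt
      (G := G) (S := Finset.univ.filter (fun i => x i ≤ l.getD (f + 1 - 1) 0)) (by omega)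
    exact ⟨i, hiG, (Finset.mem_filter.mp hiS).2⟩
  have hB : ∃ i ∈ G, orderStat x (n - f) ≤ x i := by
    have h1 := drop_filter_ge hsorted (k := n - f) (by omega) (by omega)
    rw [filter_length_eq_card x (fun a => l.getD (n - f - 1) 0 ≤ a), hlen] at h1
    obtain ⟨i, hiS, hiG⟩ := exists_mem_compl_lt
      (G := G) (S := Finset.univ.filter (fun i => l.getD (n - f - 1) 0 ≤ x i)) (by omega)
    exact ⟨i, hiG, (Finset.mem_filter.mp hiS).2⟩
  have hmono : orderStat x (f + 1) ≤ orderStat x (n - f) := by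
    have h1 : f + 1 - 1 < l.length := by omega
    have h2 : n - f - 1 < l.length := by omega
    rw [orderStat, orderStat, ← hl, List.getD_eq_getElem l 0 h1, List.getD_eq_getElem l 0 h2]
    exact hsorted.rel_get_of_le (a := ⟨f + 1 - 1, h1⟩) (b := ⟨n - f - 1, h2⟩) (by simp; omega)
  obtain ⟨i, hiG, hi⟩ := hA
  obtain ⟨j, hjG, hj⟩ := hB
  have h1 : G.inf' hne x ≤ x i := Finset.inf'_le x hiG
  have h2 : x j ≤ G.sup' hne x := Finset.le_sup' x hjG
  constructor <;> (rw [ftMid]; linarith)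
end

section
/- Halving (convergence) property of the fault-tolerant midpoint under exact agreement: let n, f be natural numbers with n > 3f, let x, y : Fin n → ℝ, and let G ⊆ Fin n have complement of cardinality at most f. If x i = y i for every i ∈ G, then |mid_f(x) − mid_f(y)| ≤ (max_{i∈G} x i − min_{i∈G} x i)/2, where mid_f(z) = (z_(f+1) + z_(n−f))/2. (This is the 'convergence property of approximate agreement' invoked in the proofs of Lemma 3 and Lemma 7 of the paper: two nonfaulty nodes that receive identical values from all nonfaulty senders, but possibly different arbitrary values from the at most f faulty senders, compute fault-tolerant midpoints at distance at most half the spread of the nonfaulty values.) -/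
/-!
Let `m ≤ M` be the least and greatest value of `x` on `G`, and `A`, `B` the `(f+1)`-st
smallest and `(f+1)`-st largest of these values; `A ≤ B` because `|G| ≥ 2f + 1`.
Adding the at most `f` values indexed by `Gᶜ` to the values on `G` shifts every order
statistic by at most `f` ranks, so for `z = x` and `z = y` alike, `z_(f+1) ∈ [m, A]` and
`z_(n-f) ∈ [B, M]`. Both midpoints therefore lie in `[(m + B)/2, (A + M)/2]`, an interval of
length at most `(M - m)/2`. Order statistics are compared through the counting
characterisation `z_(k) ≤ a ↔ k ≤ #{i | z i ≤ a}`.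
-/

open Finset

namespace List

variable {α : Type*} [LinearOrder α] {l : List α}

theorem SortedLE.lt_countP_le_getElem (hl : l.SortedLE) {k : ℕ} (hk : k < l.length) :
    k < l.countP (· ≤ l[k]) := by
  have hprefix : (l.take (k + 1)).countP (· ≤ l[k]) = k + 1 := by
    rw [countP_eq_length.2, length_take_of_le hk]
    intro a ha
    obtain ⟨i, hi, rfl⟩ := mem_take_iff_getElem.1 ha
    simpa using hl.getElem_le_getElem_of_le (by omega : i ≤ k)
  exact hprefix.symm.trans_le (take_sublist _ _).countP_le

theorem SortedLE.countP_lt_getElem_le (hl : l.SortedLE) {k : ℕ} (hk : k < l.length) :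
    l.countP (· < l[k]) ≤ k := by
  generalize ha : l[k] = a
  have hsuffix : (l.drop k).countP (· < a) = 0 := by
    rw [countP_eq_zero]
    intro b hb
    obtain ⟨i, hi, rfl⟩ := mem_iff_getElem.1 hb
    simpa [← ha] using hl.getElem_le_getElem_of_le (by omega : k ≤ k + i)
  rw [← take_append_drop k l, countP_append, hsuffix, add_zero]
  exact countP_le_length.trans (length_take_le _ _)

theorem SortedLE.getElem_le_iff (hl : l.SortedLE) {k : ℕ} (hk : k < l.length) {a : α} :
    l[k] ≤ a ↔ k < l.countP (· ≤ a) := by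
  constructor
  · intro h
    calc k < l.countP (· ≤ l[k]) := hl.lt_countP_le_getElem hk
      _ ≤ l.countP (· ≤ a) :=
        countP_mono_left fun b _ hb => by simpa using (of_decide_eq_true hb).trans h
  · intro h
    by_contra! h'
    have hle : l.countP (· ≤ a) ≤ l.countP (· < l[k]) :=
      countP_mono_left fun b _ hb => by simpa using (of_decide_eq_true hb).trans_lt h'
    have := hl.countP_lt_getElem_le hk
    omega

theorem SortedLE.le_getElem_iff (hl : l.SortedLE) {k : ℕ} (hk : k < l.length) {a : α} :
    a ≤ l[k] ↔ l.countP (· < a) ≤ k := by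
  constructor
  · intro h
    calc l.countP (· < a) ≤ l.countP (· < l[k]) :=
          countP_mono_left fun b _ hb => by simpa using (of_decide_eq_true hb).trans_le h
      _ ≤ k := hl.countP_lt_getElem_le hk
  · intro h
    by_contra! h'
    have hle : l.countP (· ≤ l[k]) ≤ l.countP (· < a) :=
      countP_mono_left fun b _ hb => by simpa using (of_decide_eq_true hb).trans_lt h'
    have := hl.lt_countP_le_getElem hk
    omega

end List

section OrderStatOn

variable {n : ℕ} {G H : Finset (Fin n)} {x y : Fin n → ℝ} {j k : ℕ} {a : ℝ}

theorem countP_sort_map_val (G : Finset (Fin n)) (x : Fin n → ℝ) (p : ℝ → Prop)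
    [DecidablePred p] :
    ((G.val.map x).sort (· ≤ ·)).countP (fun a => decide (p a)) = #{i ∈ G | p (x i)} := by
  rw [← Multiset.coe_countP, Multiset.sort_eq, Multiset.countP_map]
  rfl

theorem orderStatOn_eq_getElem (hk : k - 1 < #G) :
    orderStatOn G x k =
      ((G.val.map x).sort (· ≤ ·))[k - 1]'(by simpa [Multiset.length_sort] using hk) :=
  List.getD_eq_getElem _ _ _

theorem sortedLE_sort_map_val (G : Finset (Fin n)) (x : Fin n → ℝ) :
    ((G.val.map x).sort (· ≤ ·)).SortedLE :=
  (Multiset.pairwise_sort _ _).sortedLE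

theorem orderStatOn_le_iff (hk₀ : 0 < k) (hk : k ≤ #G) :
    orderStatOn G x k ≤ a ↔ k ≤ #{i ∈ G | x i ≤ a} := by
  rw [orderStatOn_eq_getElem (by omega), (sortedLE_sort_map_val G x).getElem_le_iff,
    countP_sort_map_val G x (· ≤ a)]
  omega

theorem le_orderStatOn_iff (hk₀ : 0 < k) (hk : k ≤ #G) :
    a ≤ orderStatOn G x k ↔ #{i ∈ G | x i < a} < k := by
  rw [orderStatOn_eq_getElem (by omega), (sortedLE_sort_map_val G x).le_getElem_iff,
    countP_sort_map_val G x (· < a)]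
  omega

theorem orderStatOn_mono (hj₀ : 0 < j) (hjk : j ≤ k) (hk : k ≤ #G) :
    orderStatOn G x j ≤ orderStatOn G x k :=
  (orderStatOn_le_iff hj₀ (hjk.trans hk)).2 <|
    hjk.trans <| (orderStatOn_le_iff (hj₀.trans_le hjk) hk).1 le_rfl

theorem orderStatOn_congr (h : ∀ i ∈ G, x i = y i) : orderStatOn G x = orderStatOn G y := by
  ext k
  rw [orderStatOn, orderStatOn, Multiset.map_congr rfl h]

theorem inf'_le_orderStatOn (hG : G.Nonempty) (hk₀ : 0 < k) (hk : k ≤ #G) :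
    G.inf' hG x ≤ orderStatOn G x k := by
  rw [le_orderStatOn_iff hk₀ hk, card_eq_zero.2]
  · exact hk₀
  · exact filter_eq_empty_iff.2 fun i hi => not_lt.2 (inf'_le x hi)

theorem orderStatOn_le_sup' (hG : G.Nonempty) (hk₀ : 0 < k) (hk : k ≤ #G) :
    orderStatOn G x k ≤ G.sup' hG x := by
  rw [orderStatOn_le_iff hk₀ hk, filter_true_of_mem fun i hi => le_sup' x hi]
  exact hk

theorem orderStatOn_le_of_subset (hGH : G ⊆ H) (hk₀ : 0 < k) (hk : k ≤ #G) :
    orderStatOn H x k ≤ orderStatOn G x k := by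
  rw [orderStatOn_le_iff hk₀ (hk.trans (card_le_card hGH))]
  exact ((orderStatOn_le_iff hk₀ hk).1 le_rfl).trans
    (card_le_card (filter_subset_filter _ hGH))

theorem orderStatOn_le_orderStatOn_add_card_sdiff (hGH : G ⊆ H) (hk₀ : 0 < k) (hk : k ≤ #G) :
    orderStatOn G x k ≤ orderStatOn H x (k + #(H \ G)) := by
  have hcard : #(H \ G) + #G = #H := card_sdiff_add_card_eq_card hGH
  rw [le_orderStatOn_iff (by omega) (by omega)]
  have hsplit :
      {i ∈ H | x i < orderStatOn G x k} ⊆ {i ∈ G | x i < orderStatOn G x k} ∪ (H \ G) := by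
    intro i hi
    by_cases hiG : i ∈ G <;> simp_all
  calc #{i ∈ H | x i < orderStatOn G x k}
      ≤ #{i ∈ G | x i < orderStatOn G x k} + #(H \ G) :=
        (card_le_card hsplit).trans (card_union_le _ _)
    _ < k + #(H \ G) := by
        gcongr
        exact (le_orderStatOn_iff hk₀ hk).1 le_rfl

end OrderStatOn

section TrimmedRange

variable {n f : ℕ} {G : Finset (Fin n)}

theorem card_add_card_compl_fin (G : Finset (Fin n)) : #G + #Gᶜ = n := by
  rw [card_add_card_compl, Fintype.card_fin]

theorem orderStat_eq_orderStatOn_univ (x : Fin n → ℝ) (k : ℕ) :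
    orderStat x k = orderStatOn univ x k :=
  rfl

theorem orderStat_succ_mem_Icc (hG : G.Nonempty) (hGf : #Gᶜ ≤ f) (hfG : f < #G)
    (x : Fin n → ℝ) :
    orderStat x (f + 1) ∈ Set.Icc (G.inf' hG x) (orderStatOn G x (f + 1)) := by
  rw [orderStat_eq_orderStatOn_univ]
  refine ⟨?_, orderStatOn_le_of_subset (subset_univ G) (Nat.succ_pos f) hfG⟩
  have hshift : f + 1 - #Gᶜ + #(univ \ G) = f + 1 := by
    rw [← compl_eq_univ_sdiff]
    omega
  calc G.inf' hG x ≤ orderStatOn G x (f + 1 - #Gᶜ) :=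
        inf'_le_orderStatOn hG (by omega) (by omega)
    _ ≤ orderStatOn univ x (f + 1 - #Gᶜ + #(univ \ G)) :=
      orderStatOn_le_orderStatOn_add_card_sdiff (subset_univ G) (by omega) (by omega)
    _ = orderStatOn univ x (f + 1) := by rw [hshift]

theorem orderStat_sub_mem_Icc (hG : G.Nonempty) (hGf : #Gᶜ ≤ f) (hfG : f < #G)
    (x : Fin n → ℝ) :
    orderStat x (n - f) ∈ Set.Icc (orderStatOn G x (#G - f)) (G.sup' hG x) := by
  have hcard := card_add_card_compl_fin G
  rw [orderStat_eq_orderStatOn_univ]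
  constructor
  · have hshift : #G - f + #(univ \ G) = n - f := by
      rw [← compl_eq_univ_sdiff]
      omega
    calc orderStatOn G x (#G - f)
        ≤ orderStatOn univ x (#G - f + #(univ \ G)) :=
          orderStatOn_le_orderStatOn_add_card_sdiff (subset_univ G) (by omega) (by omega)
      _ = orderStatOn univ x (n - f) := by rw [hshift]
  · calc orderStatOn univ x (n - f) ≤ orderStatOn G x (n - f) :=
        orderStatOn_le_of_subset (subset_univ G) (by omega) (by omega)
      _ ≤ G.sup' hG x := orderStatOn_le_sup' hG (by omega) (by omega)

end TrimmedRange

/-- Halving (convergence) property of the fault-tolerant midpoint under exact agreement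
on the nonfaulty entries. -/
theorem stmt_3 (n f : ℕ) (hn : 3 * f < n) (x y : Fin n → ℝ) (G : Finset (Fin n))
    (hG : Gᶜ.card ≤ f) (hxy : ∀ i ∈ G, x i = y i) :
    |ftMid n f x - ftMid n f y| ≤
      (G.sup' (nonempty_of_compl hn hG) x - G.inf' (nonempty_of_compl hn hG) x) / 2 := by
  have hGne := nonempty_of_compl hn hG
  have hfG : 2 * f < #G := by
    have := card_add_card_compl_fin G
    omega
  have hAB : orderStatOn G x (f + 1) ≤ orderStatOn G x (#G - f) :=
    orderStatOn_mono (Nat.succ_pos f) (by omega) (by omega)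
  obtain ⟨hx₁, hx₂⟩ := orderStat_succ_mem_Icc hGne hG (by omega) x
  obtain ⟨hx₃, hx₄⟩ := orderStat_sub_mem_Icc hGne hG (by omega) x
  obtain ⟨hy₁, hy₂⟩ := orderStat_succ_mem_Icc hGne hG (by omega) y
  obtain ⟨hy₃, hy₄⟩ := orderStat_sub_mem_Icc hGne hG (by omega) y
  rw [← inf'_congr hGne rfl hxy] at hy₁
  rw [← orderStatOn_congr hxy] at hy₂ hy₃
  rw [← sup'_congr hGne rfl hxy] at hy₄
  rw [ftMid, ftMid, abs_le]
  constructor <;> linarith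
end

section
/- Halving property of the fault-tolerant midpoint under bounded measurement error: let n, f be natural numbers with n > 3f, let d ≥ 0, let x, y : Fin n → ℝ, and let G ⊆ Fin n have complement of cardinality at most f. If |x i − y i| ≤ d for every i ∈ G, then |mid_f(x) − mid_f(y)| ≤ (max_{i∈G} x i − min_{i∈G} x i)/2 + d, where mid_f(z) = (z_(f+1) + z_(n−f))/2. (This quantifies the per-round error term 'd' appearing in the bound |I_{k+1}| ≤ |I_k|/2 + d + ρϑ⁻¹T of Lemma 3 of the paper, where the nonfaulty nodes' observations of each other's pulses differ by at most the message-delay bound d.) -/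
/-!
With at most `f` faulty entries the trimmed order statistics stay within the nonfaulty range:
`min_G x ≤ x_(f+1)` and `x_(n-f) ≤ max_G x`, and likewise for `y` up to `d`. Since at least
`n - 2f > f` nonfaulty entries lie above `x_(f+1)`, counting also gives the crossed bounds
`x_(f+1) ≤ y_(n-f) + d` and `y_(f+1) ≤ x_(n-f) + d`.
Then `2 (mid x - mid y) = (x_(f+1) - y_(n-f)) + (x_(n-f) - y_(f+1)) ≤ d + (max_G x - min_G x + d)`,
and symmetrically.
-/

open Finset

namespace List

variable {α : Type*} [Preorder α] {l : List α}

lemma Pairwise.getElem_le_getElem (hl : l.Pairwise (· ≤ ·)) {i j : ℕ} (hij : i ≤ j)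
    (hj : j < l.length) : l[i] ≤ l[j] :=
  hl.rel_get_of_le (a := ⟨i, hij.trans_lt hj⟩) (b := ⟨j, hj⟩) hij

lemma Pairwise.succ_le_countP_le_getElem [DecidableLE α] (hl : l.Pairwise (· ≤ ·)) {k : ℕ}
    (hk : k < l.length) : k + 1 ≤ l.countP (· ≤ l[k]) := by
  have hprefix : ∀ a ∈ l.take (k + 1), a ≤ l[k] := by
    intro a ha
    obtain ⟨j, hj, rfl⟩ := mem_take_iff_getElem.mp ha
    exact hl.getElem_le_getElem (by omega) hk
  calc k + 1 = (l.take (k + 1)).length := by simp only [length_take]; omega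
    _ = (l.take (k + 1)).countP (· ≤ l[k]) := (countP_eq_length.mpr (by simpa using hprefix)).symm
    _ ≤ l.countP (· ≤ l[k]) := (take_sublist _ _).countP_le

lemma Pairwise.length_sub_le_countP_getElem_le [DecidableLE α] (hl : l.Pairwise (· ≤ ·))
    {k : ℕ} (hk : k < l.length) : l.length - k ≤ l.countP (l[k] ≤ ·) := by
  have hsuffix : ∀ a ∈ l.drop k, l[k] ≤ a := by
    intro a ha
    obtain ⟨j, hj, rfl⟩ := mem_drop_iff_getElem.mp ha
    exact hl.getElem_le_getElem (by omega) (by omega)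
  calc l.length - k = (l.drop k).length := (length_drop ..).symm
    _ = (l.drop k).countP (l[k] ≤ ·) := (countP_eq_length.mpr (by simpa using hsuffix)).symm
    _ ≤ l.countP (l[k] ≤ ·) := (drop_sublist _ _).countP_le

end List

lemma card_filter_le_card_filter_add_card_compl {ι : Type*} [Fintype ι] [DecidableEq ι]
    {G : Finset ι} {p q : ι → Prop} [DecidablePred p] [DecidablePred q]
    (h : ∀ i ∈ G, p i → q i) : #{i | p i} ≤ #{i | q i} + #Gᶜ := by
  calc #{i | p i} ≤ #(univ.filter q ∪ Gᶜ) := by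
        refine card_le_card fun i hi => ?_
        by_cases hiG : i ∈ G
        · exact mem_union_left _ (by simp_all)
        · exact mem_union_right _ (mem_compl.mpr hiG)
    _ ≤ #{i | q i} + #Gᶜ := card_union_le _ _

section OrderStat

variable {n k : ℕ} (z : Fin n → ℝ)

lemma card_filter_eq_countP_sort (p : ℝ → Prop) [DecidablePred p] :
    #{i | p (z i)} = ((Multiset.map z univ.val).sort (· ≤ ·)).countP (p ·) := by
  rw [← Multiset.coe_countP, Multiset.sort_eq, Multiset.countP_map]
  rfl

lemma card_le_orderStat (hk : 1 ≤ k) (hkn : k ≤ n) : k ≤ #{i | z i ≤ orderStat z k} := by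
  rw [card_filter_eq_countP_sort z (· ≤ orderStat z k), orderStat]
  set l := (Multiset.map z univ.val).sort (· ≤ ·)
  have hlen : l.length = n := by simp [l]
  have hk' : k - 1 < l.length := by omega
  rw [List.getD_eq_getElem _ _ hk']
  have hl : l.Pairwise (· ≤ ·) := Multiset.pairwise_sort _ _
  have := hl.succ_le_countP_le_getElem hk'
  omega

lemma card_orderStat_le (hk : 1 ≤ k) (hkn : k ≤ n) : n < k + #{i | orderStat z k ≤ z i} := by
  rw [card_filter_eq_countP_sort z (orderStat z k ≤ ·), orderStat]
  set l := (Multiset.map z univ.val).sort (· ≤ ·)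
  have hlen : l.length = n := by simp [l]
  have hk' : k - 1 < l.length := by omega
  rw [List.getD_eq_getElem _ _ hk']
  have hl : l.Pairwise (· ≤ ·) := Multiset.pairwise_sort _ _
  have := hl.length_sub_le_countP_getElem_le hk'
  omega

lemma orderStat_le_iff (hk : 1 ≤ k) (hkn : k ≤ n) {c : ℝ} :
    orderStat z k ≤ c ↔ k ≤ #{i | z i ≤ c} := by
  refine ⟨fun h => (card_le_orderStat z hk hkn).trans ?_, fun h => ?_⟩
  · exact card_le_card fun i => by simpa using fun hi => hi.trans h
  · by_contra! hc
    have hdisj : #{i | z i ≤ c} ≤ #{i | ¬ orderStat z k ≤ z i} :=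
      card_le_card fun i => by simpa using fun hi => hi.trans_lt hc
    have := card_filter_add_card_filter_not (s := univ) (fun i => orderStat z k ≤ z i)
    have := card_orderStat_le z hk hkn
    simp only [card_univ, Fintype.card_fin] at *
    omega

lemma le_orderStat_iff (hk : 1 ≤ k) (hkn : k ≤ n) {c : ℝ} :
    c ≤ orderStat z k ↔ n < k + #{i | c ≤ z i} := by
  refine ⟨fun h => (card_orderStat_le z hk hkn).trans_le ?_, fun h => ?_⟩
  · exact Nat.add_le_add_left (card_le_card fun i => by simpa using h.trans) k
  · by_contra! hc
    have hdisj : #{i | c ≤ z i} ≤ #{i | ¬ z i ≤ orderStat z k} :=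
      card_le_card fun i => by simpa using hc.trans_le
    have := card_filter_add_card_filter_not (s := univ) (fun i => z i ≤ orderStat z k)
    have := card_le_orderStat z hk hkn
    simp only [card_univ, Fintype.card_fin] at *
    omega

end OrderStat

section FaultTolerant

variable {n f : ℕ} {G : Finset (Fin n)} {c : ℝ}

lemma le_orderStat_succ_of_forall_mem (z : Fin n → ℝ) (hf : f < n) (hG : #Gᶜ ≤ f)
    (h : ∀ i ∈ G, c ≤ z i) : c ≤ orderStat z (f + 1) := by
  rw [le_orderStat_iff z (by omega) hf]
  have := card_filter_le_card_filter_add_card_compl (p := fun _ => True) fun i hi _ => h i hi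
  simp only [filter_true, card_univ, Fintype.card_fin] at this
  omega

lemma orderStat_sub_le_of_forall_mem (z : Fin n → ℝ) (hf : f < n) (hG : #Gᶜ ≤ f)
    (h : ∀ i ∈ G, z i ≤ c) : orderStat z (n - f) ≤ c := by
  rw [orderStat_le_iff z (by omega) (by omega)]
  have := card_filter_le_card_filter_add_card_compl (p := fun _ => True) fun i hi _ => h i hi
  simp only [filter_true, card_univ, Fintype.card_fin] at this
  omega

lemma orderStat_succ_le_orderStat_sub_add {x y : Fin n → ℝ} {d : ℝ} (hn : 3 * f < n)
    (hG : #Gᶜ ≤ f) (h : ∀ i ∈ G, x i ≤ y i + d) :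
    orderStat x (f + 1) ≤ orderStat y (n - f) + d := by
  rw [← sub_le_iff_le_add, le_orderStat_iff y (by omega) (by omega)]
  have hx := card_orderStat_le x (k := f + 1) (by omega) (by omega)
  have := card_filter_le_card_filter_add_card_compl
    (p := fun i => orderStat x (f + 1) ≤ x i) (q := fun i => orderStat x (f + 1) - d ≤ y i)
    fun i hi hxi => by linarith [h i hi]
  omega

end FaultTolerant

theorem stmt_4_general (n f : ℕ) (hn : 3 * f < n) (d : ℝ)
    (x y : Fin n → ℝ) (G : Finset (Fin n)) (hG : Gᶜ.card ≤ f)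
    (hxy : ∀ i ∈ G, |x i - y i| ≤ d) :
    |ftMid n f x - ftMid n f y| ≤
      (G.sup' (nonempty_of_compl hn hG) x - G.inf' (nonempty_of_compl hn hG) x) / 2 + d := by
  have hne := nonempty_of_compl hn hG
  have hf : f < n := by omega
  have hxy' : ∀ i ∈ G, x i ≤ y i + d ∧ y i ≤ x i + d := fun i hi => by
    constructor <;> linarith [abs_sub_le_iff.mp (hxy i hi)]
  have hxlo : G.inf' hne x ≤ orderStat x (f + 1) :=
    le_orderStat_succ_of_forall_mem x hf hG fun i hi => inf'_le x hi
  have hxhi : orderStat x (n - f) ≤ G.sup' hne x :=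
    orderStat_sub_le_of_forall_mem x hf hG fun i hi => le_sup' x hi
  have hylo : G.inf' hne x - d ≤ orderStat y (f + 1) := le_orderStat_succ_of_forall_mem y hf hG
    fun i hi => by linarith [inf'_le x hi, hxy' i hi]
  have hyhi : orderStat y (n - f) ≤ G.sup' hne x + d := orderStat_sub_le_of_forall_mem y hf hG
    fun i hi => by linarith [le_sup' x hi, hxy' i hi]
  have hxy_cross := orderStat_succ_le_orderStat_sub_add hn hG fun i hi => (hxy' i hi).1
  have hyx_cross := orderStat_succ_le_orderStat_sub_add hn hG fun i hi => (hxy' i hi).2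
  rw [ftMid, ftMid, abs_le]
  constructor <;> linarith

/-- Halving property of the fault-tolerant midpoint under bounded measurement error `d`
on the nonfaulty entries. -/
theorem stmt_4 (n f : ℕ) (hn : 3 * f < n) (d : ℝ) (hd : 0 ≤ d)
    (x y : Fin n → ℝ) (G : Finset (Fin n)) (hG : Gᶜ.card ≤ f)
    (hxy : ∀ i ∈ G, |x i - y i| ≤ d) :
    |ftMid n f x - ftMid n f y| ≤
      (G.sup' (nonempty_of_compl hn hG) x - G.inf' (nonempty_of_compl hn hG) x) / 2 + d :=
  stmt_4_general n f hn d x y G hG hxy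
end

section
/- One round of the abstract fault-tolerant averaging iteration halves the pulse spread up to delay and drift errors: let n, f be natural numbers with n > 3f, let Q ⊆ Fin n have complement of cardinality at most f, let d ≥ 0, T ≥ 0 and ϑ ≥ 1. Suppose t : Q → ℝ are the current pulse instants of the nonfaulty nodes, and for each q ∈ Q there is an observation vector x_q : Fin n → ℝ with x_q p ∈ [t p, t p + d] for every p ∈ Q (values at indices outside Q arbitrary), and the next pulse instant of q is t' q = mid_f(x_q) + T_q for some T_q ∈ [T/ϑ, T]. Then (i) for all q, q' ∈ Q, |t' q − t' q'| ≤ (max_{p∈Q} t p − min_{p∈Q} t p)/2 + d + (1 − ϑ⁻¹)·T, and (ii) for all q ∈ Q, min_{p∈Q} t p + T/ϑ ≤ t' q ≤ max_{p∈Q} t p + d + T. (This is the abstract, model-free content of Lemma 3 of the paper: each simulated round of approximate agreement in the second stage of the absorption process produces next-pulse intervals I_{k+1} with |I_{k+1}| ≤ |I_k|/2 + d + ρϑ⁻¹T, contained in I_k + T + [−ϑ⁻¹ρT, d).) -/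
open Finset

/-! Each observation vector is within `d` above the true pulse times on the at least `n - f`
nonfaulty indices, so the order statistics `x_(f+1)` and `x_(n-f)` lie in `[min t, max t + d]`.
For two observers `q, q'`, at least `|Q| - f ≥ f + 1` nonfaulty `p` have `x_q' p ≤ x_q'(n-f)`, and
one of them has `x_q(f+1) ≤ x_q p`; hence `x_q(f+1) ≤ x_q'(n-f) + d`. Pairing this with
`x_q(n-f) ≤ max t + d` and `min t ≤ x_q'(f+1)` bounds the difference of the two midpoints by
`(max t - min t)/2 + d`, and the realized periods differ by at most `T - T/ϑ`. -/

namespace List.Pairwise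

variable {α : Type*} [LinearOrder α] {l : List α} {k : ℕ} {c : α}

theorem countP_lt_le_of_le_getElem (hl : l.Pairwise (· ≤ ·)) (hk : k < l.length)
    (hc : c ≤ l[k]) : l.countP (· < c) ≤ k := by
  have hdrop : (l.drop k).countP (· < c) = 0 := by
    have hsorted : (l[k] :: l.drop (k + 1)).Pairwise (· ≤ ·) := by
      rw [← List.drop_eq_getElem_cons hk]; exact hl.drop
    rw [List.drop_eq_getElem_cons hk, List.countP_eq_zero]
    intro a ha
    simp only [decide_eq_true_eq, not_lt]
    rcases List.mem_cons.mp ha with rfl | ha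
    · exact hc
    · exact hc.trans (List.rel_of_pairwise_cons hsorted ha)
  rw [← List.take_append_drop k l, List.countP_append, hdrop]
  simpa using List.countP_le_length.trans (List.length_take_le k l)

theorem countP_gt_le_of_getElem_le (hl : l.Pairwise (· ≤ ·)) (hk : k < l.length)
    (hc : l[k] ≤ c) : l.countP (c < ·) ≤ l.length - (k + 1) := by
  have htake : (l.take (k + 1)).countP (c < ·) = 0 := by
    have hsorted : (l.take k ++ [l[k]]).Pairwise (· ≤ ·) := by
      rw [← List.take_succ_eq_append_getElem hk]; exact hl.take
    rw [List.take_succ_eq_append_getElem hk, List.countP_eq_zero]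
    intro a ha
    simp only [decide_eq_true_eq, not_lt]
    rcases List.mem_append.mp ha with ha | ha
    · exact (List.pairwise_append.mp hsorted).2.2 a ha _ (List.mem_singleton_self _) |>.trans hc
    · rw [List.mem_singleton.mp ha]; exact hc
  rw [← List.take_append_drop (k + 1) l, List.countP_append, htake]
  simpa using List.countP_le_length (l := l.drop (k + 1))

end List.Pairwise

section OrderStat

variable {n : ℕ} (x : Fin n → ℝ) {k : ℕ}

noncomputable def sortedValues : List ℝ :=
  (Multiset.map x (univ : Finset (Fin n)).val).sort (· ≤ ·)

theorem length_sortedValues : (sortedValues x).length = n := by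
  simp [sortedValues]

theorem sortedValues_pairwise : (sortedValues x).Pairwise (· ≤ ·) :=
  Multiset.pairwise_sort ..

theorem countP_sortedValues (p : ℝ → Prop) [DecidablePred p] :
    (sortedValues x).countP (fun a => decide (p a)) = #{i | p (x i)} := by
  rw [sortedValues, ← Multiset.coe_countP, Multiset.sort_eq, Multiset.countP_map]
  rfl

theorem orderStat_eq_getElem (hk₀ : 0 < k) (hkn : k ≤ n) :
    orderStat x k = (sortedValues x)[k - 1]'(by rw [length_sortedValues]; omega) :=
  List.getD_eq_getElem ..

theorem card_lt_orderStat_lt (hk₀ : 0 < k) (hkn : k ≤ n) : #{i | x i < orderStat x k} < k := by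
  rw [← countP_sortedValues x (· < orderStat x k)]
  have := (sortedValues_pairwise x).countP_lt_le_of_le_getElem _
    (orderStat_eq_getElem x hk₀ hkn).le
  omega

theorem card_orderStat_lt_le (hk₀ : 0 < k) (hkn : k ≤ n) : #{i | orderStat x k < x i} ≤ n - k := by
  rw [← countP_sortedValues x (orderStat x k < ·)]
  have := (sortedValues_pairwise x).countP_gt_le_of_getElem_le _
    (orderStat_eq_getElem x hk₀ hkn).ge
  rw [length_sortedValues] at this
  omega

variable {x} {S : Finset (Fin n)} {c : ℝ}

theorem orderStat_le_of_forall_le (hk₀ : 0 < k) (hkn : k ≤ n) (hS : k ≤ #S)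
    (h : ∀ i ∈ S, x i ≤ c) : orderStat x k ≤ c := by
  by_contra! hlt
  have hsub : S ⊆ ({i | x i < orderStat x k} : Finset _) := fun i hi ↦ by
    simpa using (h i hi).trans_lt hlt
  have := (card_le_card hsub).trans_lt (card_lt_orderStat_lt x hk₀ hkn)
  omega

theorem le_orderStat_of_forall_le (hk₀ : 0 < k) (hkn : k ≤ n) (hS : n - k < #S)
    (h : ∀ i ∈ S, c ≤ x i) : c ≤ orderStat x k := by
  by_contra! hlt
  have hsub : S ⊆ ({i | orderStat x k < x i} : Finset _) := fun i hi ↦ by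
    simpa using hlt.trans_le (h i hi)
  have := (card_le_card hsub).trans (card_orderStat_lt_le x hk₀ hkn)
  omega

theorem orderStat_le_orderStat_add {y : Fin n → ℝ} {l : ℕ} {Q : Finset (Fin n)} {d : ℝ}
    (hk₀ : 0 < k) (hkn : k ≤ n) (hl₀ : 0 < l) (hln : l ≤ n) (hQ : k + n ≤ #Q + l)
    (hxy : ∀ p ∈ Q, x p ≤ y p + d) : orderStat x k ≤ orderStat y l + d := by
  have hfew : #{p ∈ Q | ¬y p ≤ orderStat y l} ≤ n - l :=
    (card_le_card fun p hp ↦ by simpa using (mem_filter.mp hp).2).trans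
      (card_orderStat_lt_le y hl₀ hln)
  have hsplit := card_filter_add_card_filter_not (s := Q) (fun p ↦ y p ≤ orderStat y l)
  refine orderStat_le_of_forall_le (S := {p ∈ Q | y p ≤ orderStat y l}) hk₀ hkn (by omega)
    fun p hp ↦ ?_
  obtain ⟨hpQ, hpy⟩ := mem_filter.mp hp
  linarith [hxy p hpQ]

end OrderStat

section FtMid

variable {n f : ℕ} {Q : Finset (Fin n)} {x y : Fin n → ℝ} {a b d : ℝ}

theorem ftMid_mem_Icc (hf : 2 * f < n) (hQ : n ≤ #Q + f) (ha : ∀ p ∈ Q, a ≤ x p)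
    (hb : ∀ p ∈ Q, x p ≤ b) : ftMid n f x ∈ Set.Icc a b := by
  have hlo₁ : a ≤ orderStat x (f + 1) :=
    le_orderStat_of_forall_le (by omega) (by omega) (by omega) ha
  have hlo₂ : a ≤ orderStat x (n - f) :=
    le_orderStat_of_forall_le (by omega) (by omega) (by omega) ha
  have hhi₁ : orderStat x (f + 1) ≤ b :=
    orderStat_le_of_forall_le (by omega) (by omega) (by omega) hb
  have hhi₂ : orderStat x (n - f) ≤ b :=
    orderStat_le_of_forall_le (by omega) (by omega) (by omega) hb
  constructor <;> unfold ftMid <;> linarith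

theorem ftMid_sub_ftMid_le (hf : 3 * f < n) (hQ : n ≤ #Q + f) (hxy : ∀ p ∈ Q, x p ≤ y p + d)
    (ha : ∀ p ∈ Q, a ≤ y p) (hb : ∀ p ∈ Q, x p ≤ b) :
    ftMid n f x - ftMid n f y ≤ (b - a + d) / 2 := by
  have hcross : orderStat x (f + 1) ≤ orderStat y (n - f) + d :=
    orderStat_le_orderStat_add (by omega) (by omega) (by omega) (by omega) (by omega) hxy
  have hhi : orderStat x (n - f) ≤ b :=
    orderStat_le_of_forall_le (by omega) (by omega) (by omega) hb
  have hlo : a ≤ orderStat y (f + 1) :=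
    le_orderStat_of_forall_le (by omega) (by omega) (by omega) ha
  unfold ftMid
  linarith

end FtMid

theorem stmt_8_general (n f : ℕ) (hn : 3 * f < n) (Q : Finset (Fin n)) (hQ : Qᶜ.card ≤ f)
    (d T ϑ : ℝ)
    (t t' : Fin n → ℝ)
    (hstep : ∀ q ∈ Q, ∃ x : Fin n → ℝ,
      (∀ p ∈ Q, x p ∈ Set.Icc (t p) (t p + d)) ∧
        ∃ Tq ∈ Set.Icc (T / ϑ) T, t' q = ftMid n f x + Tq) :
    (∀ q ∈ Q, ∀ q' ∈ Q,
        |t' q - t' q'| ≤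
          (Q.sup' (nonempty_of_compl hn hQ) t - Q.inf' (nonempty_of_compl hn hQ) t) / 2
            + d + (1 - ϑ⁻¹) * T) ∧
      (∀ q ∈ Q,
        Q.inf' (nonempty_of_compl hn hQ) t + T / ϑ ≤ t' q ∧
          t' q ≤ Q.sup' (nonempty_of_compl hn hQ) t + d + T) := by
  have hQcard : n ≤ #Q + f := by
    have := card_compl Q
    simp only [Fintype.card_fin] at this
    omega
  set m := Q.inf' (nonempty_of_compl hn hQ) t
  set M := Q.sup' (nonempty_of_compl hn hQ) t
  choose! x hx Tq hTq ht' using hstep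
  have hlo : ∀ q ∈ Q, ∀ p ∈ Q, m ≤ x q p := fun q hq p hp ↦ (inf'_le t hp).trans (hx q hq p hp).1
  have hhi : ∀ q ∈ Q, ∀ p ∈ Q, x q p ≤ M + d := fun q hq p hp ↦
    (hx q hq p hp).2.trans (by linarith [le_sup' t hp])
  have hspread : ∀ q ∈ Q, ∀ q' ∈ Q, ftMid n f (x q) - ftMid n f (x q') ≤ (M - m) / 2 + d := by
    intro q hq q' hq'
    have := ftMid_sub_ftMid_le (d := d) hn hQcard
      (fun p hp ↦ (hx q hq p hp).2.trans (by linarith [(hx q' hq' p hp).1])) (hlo q' hq') (hhi q hq)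
    linarith
  have hdrift : (1 - ϑ⁻¹) * T = T - T / ϑ := by ring
  refine ⟨fun q hq q' hq' ↦ ?_, fun q hq ↦ ?_⟩
  · rw [ht' q hq, ht' q' hq', abs_sub_le_iff, hdrift]
    constructor <;> linarith [hspread q hq q' hq', hspread q' hq' q hq, (hTq q hq).1, (hTq q hq).2,
      (hTq q' hq').1, (hTq q' hq').2]
  · have hmid := ftMid_mem_Icc (by omega) hQcard (hlo q hq) (hhi q hq)
    rw [ht' q hq]
    exact ⟨by linarith [hmid.1, (hTq q hq).1], by linarith [hmid.2, (hTq q hq).2]⟩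

/-- One round of the abstract fault-tolerant averaging iteration halves the pulse
spread up to delay and drift errors, and keeps the next pulses within the advanced
envelope of the current ones. -/
theorem stmt_8 (n f : ℕ) (hn : 3 * f < n) (Q : Finset (Fin n)) (hQ : Qᶜ.card ≤ f)
    (d T ϑ : ℝ) (hd : 0 ≤ d) (hT : 0 ≤ T) (hϑ : 1 ≤ ϑ)
    (t t' : Fin n → ℝ)
    (hstep : ∀ q ∈ Q, ∃ x : Fin n → ℝ,
      (∀ p ∈ Q, x p ∈ Set.Icc (t p) (t p + d)) ∧
        ∃ Tq ∈ Set.Icc (T / ϑ) T, t' q = ftMid n f x + Tq) :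
    (∀ q ∈ Q, ∀ q' ∈ Q,
        |t' q - t' q'| ≤
          (Q.sup' (nonempty_of_compl hn hQ) t - Q.inf' (nonempty_of_compl hn hQ) t) / 2
            + d + (1 - ϑ⁻¹) * T) ∧
      (∀ q ∈ Q,
        Q.inf' (nonempty_of_compl hn hQ) t + T / ϑ ≤ t' q ∧
          t' q ≤ Q.sup' (nonempty_of_compl hn hQ) t + d + T) :=
  stmt_8_general n f hn Q hQ d T ϑ t t' hstep
end
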